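/- Let S be a binomial random variable with parameters N ≥ 1 and success probability q ∈ (0,1]. Then E[1{S > 0}·(1/S)] ≤ 2/((N+1)·q). -/

import Mathlib

open Finset

/-- Let `S ~ Binomial(N, q)` with `N ≥ 1` and `q ∈ (0,1]`.  Then
`E[1{S > 0} · (1 / S)] ≤ 2 / ((N + 1) · q)`.  The expectation is written explicitly as the sum
over the binomial distribution, where the summand for `s = 0` is `0` (the indicator of `S > 0`). -/
theorem binomial_inv_pos_expectation_le (N : ℕ) (hN : 1 ≤ N) (q : ℝ)
    (hq : q ∈ Set.Ioc (0 : ℝ) 1) :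
    ∑ s ∈ Finset.range (N + 1),
        (if 0 < s then ((N.choose s : ℝ) * q ^ s * (1 - q) ^ (N - s)) / s else 0)
      ≤ 2 / ((N + 1) * q) := by
  obtain ⟨hq0, hq1⟩ := hq
  have hp0 : (0:ℝ) ≤ 1 - q := by linarith
  set p : ℝ := 1 - q with hp
  set c : ℝ := 2 / ((N + 1) * q) with hc
  have hc0 : 0 < (N + 1 : ℝ) * q := by positivity
  have hcpos : 0 ≤ c := by positivity
  have key : ∀ s ∈ Finset.range (N + 1),
      (if 0 < s then ((N.choose s : ℝ) * q ^ s * p ^ (N - s)) / s else 0)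
      ≤ c * (((N+1).choose (s+1) : ℝ) * q ^ (s+1) * p ^ (N + 1 - (s+1))) := by
    intro s hs
    have hsN : s ≤ N := Nat.lt_succ_iff.mp (Finset.mem_range.mp hs)
    by_cases h : 0 < s
    · simp only [if_pos h]
      have hid : ((N+1 : ℕ) : ℝ) * (N.choose s : ℝ) = ((N+1).choose (s+1) : ℝ) * (s+1 : ℕ) := by
        rw [← Nat.cast_mul, ← Nat.cast_mul, Nat.add_one_mul_choose_eq]
      have hNs : N + 1 - (s + 1) = N - s := by omega
      rw [hNs]
      have hs1 : (1:ℝ) ≤ s := by exact_mod_cast h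
      have hchoose : ((N+1).choose (s+1) : ℝ) = ((N:ℝ)+1) * (N.choose s : ℝ) / ((s:ℝ)+1) := by
        field_simp
        push_cast at hid ⊢
        linarith [hid]
      rw [hchoose, hc]
      rw [div_le_iff₀ (by exact_mod_cast h : (0:ℝ) < s)]
      have hq' : q ^ (s+1) = q ^ s * q := pow_succ q s
      have hpnn : (0:ℝ) ≤ p ^ (N - s) := pow_nonneg hp0 _
      have hch : (0:ℝ) ≤ (N.choose s : ℝ) := Nat.cast_nonneg _
      have hqs : (0:ℝ) ≤ q ^ s := pow_nonneg hq0.le _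
      -- RHS = 2 * choose * q^s * p^(N-s) * s / (s+1)
      have : 2 / ((↑N + 1) * q) * ((↑N + 1) * ↑(N.choose s) / (↑s + 1) * q ^ (s + 1) * p ^ (N - s)) * s
          = (N.choose s : ℝ) * q ^ s * p ^ (N - s) * (2 * s / (s + 1)) := by
        rw [hq']
        field_simp
      rw [this]
      have hfrac : (1:ℝ) ≤ 2 * s / (s + 1) := by
        rw [le_div_iff₀ (by linarith : (0:ℝ) < (s:ℝ) + 1)]
        linarith
      nlinarith [mul_nonneg (mul_nonneg hch hqs) hpnn]
    · simp only [if_neg h]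
      positivity
  calc ∑ s ∈ Finset.range (N + 1),
        (if 0 < s then ((N.choose s : ℝ) * q ^ s * p ^ (N - s)) / s else 0)
      ≤ ∑ s ∈ Finset.range (N + 1),
        c * (((N+1).choose (s+1) : ℝ) * q ^ (s+1) * p ^ (N + 1 - (s+1))) :=
        Finset.sum_le_sum key
    _ = c * ∑ s ∈ Finset.range (N + 1),
        (((N+1).choose (s+1) : ℝ) * q ^ (s+1) * p ^ (N + 1 - (s+1))) := by
        rw [Finset.mul_sum]
    _ ≤ c * ∑ t ∈ Finset.range (N + 2),
        (((N+1).choose t : ℝ) * q ^ t * p ^ (N + 1 - t)) := by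
        apply mul_le_mul_of_nonneg_left _ hcpos
        rw [Finset.sum_range_succ' (fun t => ((N+1).choose t : ℝ) * q ^ t * p ^ (N + 1 - t)) (N+1)]
        have : (0:ℝ) ≤ ((N+1).choose 0 : ℝ) * q ^ 0 * p ^ (N + 1 - 0) := by positivity
        linarith
    _ = c * 1 := by
        congr 1
        have hbin := add_pow q p (N+1)
        have hqp : q + p = 1 := by simp [hp]
        rw [hqp, one_pow] at hbin
        rw [hbin]
        apply Finset.sum_congr rfl
        intro t _
        ring
    _ = 2 / ((N + 1) * q) := by rw [mul_one]
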